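/- Let R be a commutative ring whose additive group is ℤ-torsion-free, and let Φ be a right exact functor from nilpotent R-algebras to abelian groups which is exact on nilpotent R-algebras whose underlying additive groups are ℚ-vector spaces and exact on nilpotent R-algebras with vanishing square. Then for every injective morphism N' → N of nilpotent R-algebras such that the additive group of N' is ℤ-torsion-free, the induced homomorphism Φ(N') → Φ(N) is injective. -/

import Mathlib

universe u v

/-- Product of `n+1` elements of a (possibly non-unital) multiplicative structure. -/
def nprod {N : Type u} [Mul N] : (n : ℕ) → (Fin (n + 1) → N) → N
  | 0, f => f 0
  | n + 1, f => f 0 * nprod n fun i => f i.succ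

/-- A bundled nilpotent `R`-algebra: a non-unital commutative `R`-algebra `N`
such that every product of `k` elements vanishes, for some `k ≥ 1`. -/
structure NilpAlg (R : Type u) [CommRing R] : Type (u + 1) where
  carrier : Type u
  [nonUnitalCommRing : NonUnitalCommRing carrier]
  [module : Module R carrier]
  [isScalarTower : IsScalarTower R carrier carrier]
  [smulCommClass : SMulCommClass R carrier carrier]
  nilpotent : ∃ k : ℕ, ∀ f : Fin (k + 1) → carrier, nprod k f = 0

attribute [instance] NilpAlg.nonUnitalCommRing NilpAlg.module NilpAlg.isScalarTower
  NilpAlg.smulCommClass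

variable {R : Type u} [CommRing R]

/-- `0 → N₁ → N₂ → N₃ → 0` is a short exact sequence of nilpotent `R`-algebras
(exactness being measured on underlying modules/additive groups). -/
def IsSES {N₁ N₂ N₃ : NilpAlg R} (i : N₁.carrier →ₙₐ[R] N₂.carrier)
    (p : N₂.carrier →ₙₐ[R] N₃.carrier) : Prop :=
  Function.Injective i ∧ Function.Surjective p ∧ ∀ x : N₂.carrier, p x = 0 ↔ x ∈ Set.range i

/-- A functor from nilpotent `R`-algebras to abelian groups. -/
structure AbFunctor (R : Type u) [CommRing R] : Type (max (u + 1) (v + 1)) where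
  obj : NilpAlg R → Type v
  [addCommGroup : ∀ N, AddCommGroup (obj N)]
  map : ∀ {N₁ N₂ : NilpAlg R}, (N₁.carrier →ₙₐ[R] N₂.carrier) → (obj N₁ →+ obj N₂)
  map_id : ∀ N : NilpAlg R, map (NonUnitalAlgHom.id R N.carrier) = AddMonoidHom.id (obj N)
  map_comp : ∀ {N₁ N₂ N₃ : NilpAlg R} (f : N₁.carrier →ₙₐ[R] N₂.carrier)
    (g : N₂.carrier →ₙₐ[R] N₃.carrier), map (g.comp f) = (map g).comp (map f)

attribute [instance] AbFunctor.addCommGroup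

/-- `Φ` is right exact: every short exact sequence `0 → N₁ → N₂ → N₃ → 0` yields an
exact sequence `Φ(N₁) → Φ(N₂) → Φ(N₃) → 0` of abelian groups. -/
def AbFunctor.RightExact (Φ : AbFunctor.{u, v} R) : Prop :=
  ∀ {N₁ N₂ N₃ : NilpAlg R} (i : N₁.carrier →ₙₐ[R] N₂.carrier)
    (p : N₂.carrier →ₙₐ[R] N₃.carrier), IsSES i p →
      Function.Surjective (Φ.map p) ∧
      ∀ y : Φ.obj N₂, Φ.map p y = 0 ↔ y ∈ Set.range (Φ.map i)

/-- `Φ` is exact on short exact sequences all of whose terms satisfy `P`: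
the induced sequence `0 → Φ(N₁) → Φ(N₂) → Φ(N₃) → 0` is exact. -/
def AbFunctor.ExactOn (Φ : AbFunctor.{u, v} R) (P : NilpAlg R → Prop) : Prop :=
  ∀ {N₁ N₂ N₃ : NilpAlg R}, P N₁ → P N₂ → P N₃ →
    ∀ (i : N₁.carrier →ₙₐ[R] N₂.carrier) (p : N₂.carrier →ₙₐ[R] N₃.carrier), IsSES i p →
      Function.Injective (Φ.map i) ∧ Function.Surjective (Φ.map p) ∧
      ∀ y : Φ.obj N₂, Φ.map p y = 0 ↔ y ∈ Set.range (Φ.map i)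

/-- The additive group underlying `N` is (the additive group of) a `ℚ`-vector space,
i.e. it is uniquely divisible. -/
def IsQVectorSpace (N : Type v) [AddCommGroup N] : Prop :=
  ∀ n : ℤ, n ≠ 0 → Function.Bijective fun x : N => n • x


/-!
Let `j : N' → W` be injective with `W` a nilpotent algebra that is a `ℚ`-vector space. We show
that `Φ j` is injective by induction on the nilpotency order of `W`. Let `B` be the annihilator
of `W` and `A = j⁻¹ B`. Both have vanishing square, and `B` is saturated, so `B` and `W / B` are
`ℚ`-vector spaces and `W / B` has smaller nilpotency order. Exactness of `Φ` on
`0 → B → W → W / B → 0` and on `0 → A → B → B / A → 0` makes `Φ A → Φ W` injective. Right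
exactness on `0 → A → N' → N' / A → 0`, together with the induction hypothesis for
`N' / A ↪ W / B`, then gives injectivity of `Φ j` by a diagram chase.

The theorem is the case `W = N ⊗ ℚ`, where `N' → N → N ⊗ ℚ` is injective because `N'` is
torsion-free.
-/

section nprod

variable {M M' : Type u}

theorem nprod_cons [Mul M] (k : ℕ) (x : M) (f : Fin (k + 1) → M) :
    nprod (k + 1) (Fin.cons x f) = x * nprod k f := by
  simp only [nprod, Fin.cons_zero, Fin.cons_succ]

theorem map_nprod [Mul M] [Mul M'] {F : Type*} [FunLike F M M'] [MulHomClass F M M'] (φ : F) :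
    ∀ (k : ℕ) (f : Fin (k + 1) → M), φ (nprod k f) = nprod k (φ ∘ f)
  | 0, _ => rfl
  | k + 1, f => by simp only [nprod, map_mul, map_nprod φ k]; rfl

theorem nprod_eq_zero_of_surjective [Mul M] [Mul M'] [Zero M'] {F : Type*} [FunLike F M M']
    [MulHomClass F M M'] (φ : F) (hφ : Function.Surjective φ) {k : ℕ}
    (h : ∀ g : Fin (k + 1) → M, φ (nprod k g) = 0) (f : Fin (k + 1) → M') : nprod k f = 0 := by
  obtain ⟨g, rfl⟩ := hφ.comp_left f
  rw [← map_nprod, h]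

theorem nprod_eq_zero_of_injective [MulZeroClass M] [MulZeroClass M'] {F : Type*}
    [FunLike F M M'] [MulHomClass F M M'] [ZeroHomClass F M M'] (φ : F)
    (hφ : Function.Injective φ) {k : ℕ} (h : ∀ g : Fin (k + 1) → M', nprod k g = 0)
    (f : Fin (k + 1) → M) : nprod k f = 0 :=
  hφ <| by rw [map_nprod, h, map_zero]

end nprod

namespace IsQVectorSpace

variable {M : Type*} [AddCommGroup M]

theorem eq_zero_of_zsmul_eq_zero (hM : IsQVectorSpace M) {n : ℤ} (hn : n ≠ 0) {x : M}
    (h : n • x = 0) : x = 0 :=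
  (hM n hn).1 (by simpa using h)

theorem addSubgroupClass (hM : IsQVectorSpace M) {S : Type*} [SetLike S M] [AddSubgroupClass S M]
    (s : S) (hs : ∀ n : ℤ, n ≠ 0 → ∀ x : M, n • x ∈ s → x ∈ s) : IsQVectorSpace s := by
  intro n hn
  refine ⟨fun x y hxy => Subtype.ext ((hM n hn).1 (congrArg Subtype.val hxy)), fun y => ?_⟩
  obtain ⟨x, hx : n • x = y⟩ := (hM n hn).2 y
  exact ⟨⟨x, hs n hn x (hx ▸ y.2)⟩, Subtype.ext hx⟩

theorem quotient (hM : IsQVectorSpace M) {R : Type*} [Ring R] [Module R M] (p : Submodule R M)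
    (hp : ∀ n : ℤ, n ≠ 0 → ∀ x : M, n • x ∈ p → x ∈ p) : IsQVectorSpace (M ⧸ p) := by
  intro n hn
  constructor
  · rintro ⟨x⟩ ⟨y⟩ hxy
    have : n • x - n • y ∈ p := (Submodule.Quotient.eq p).mp hxy
    exact (Submodule.Quotient.eq p).mpr (hp n hn _ (by rwa [smul_sub]))
  · rintro ⟨y⟩
    obtain ⟨x, hx⟩ := (hM n hn).2 y
    exact ⟨Submodule.Quotient.mk x, congrArg (Submodule.Quotient.mk (p := p)) hx⟩

end IsQVectorSpace

namespace TensorProduct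

variable {M : Type*} [AddCommGroup M]

theorem exists_tmul_eq_rat (x : M ⊗[ℤ] ℚ) : ∃ (m : M) (q : ℚ), m ⊗ₜ q = x := by
  obtain ⟨⟨m, s⟩, h⟩ := IsLocalizedModule.mk'_surjective (nonZeroDivisors ℤ)
    ((TensorProduct.comm ℤ ℚ M).toLinearMap ∘ₗ TensorProduct.mk ℤ ℚ M 1) x
  refine ⟨m, (s : ℚ)⁻¹, ?_⟩
  rw [← h, eq_comm, Function.uncurry_apply_pair, IsLocalizedModule.mk'_eq_iff]
  simp only [LinearMap.coe_comp, Function.comp_apply, mk_apply, LinearEquiv.coe_coe, comm_tmul,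
    Submonoid.smul_def, ← tmul_smul]
  rw [zsmul_eq_mul, mul_inv_cancel₀ (by exact_mod_cast nonZeroDivisors.coe_ne_zero s)]

theorem exists_zsmul_eq_zero_of_tmul_one_eq_zero {m : M} (h : m ⊗ₜ[ℤ] (1 : ℚ) = 0) :
    ∃ n : ℤ, n ≠ 0 ∧ n • m = 0 := by
  obtain ⟨s, hs⟩ := (IsLocalizedModule.eq_zero_iff (nonZeroDivisors ℤ)
    ((TensorProduct.comm ℤ ℚ M).toLinearMap ∘ₗ TensorProduct.mk ℤ ℚ M 1)).mp h
  exact ⟨s, nonZeroDivisors.coe_ne_zero s, hs⟩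

theorem isQVectorSpace_rat : IsQVectorSpace (M ⊗[ℤ] ℚ) := fun n hn =>
  (Module.End.isUnit_iff _).mp <| IsLocalizedModule.map_units (S := nonZeroDivisors ℤ)
    ((TensorProduct.comm ℤ ℚ M).toLinearMap ∘ₗ TensorProduct.mk ℤ ℚ M 1)
    ⟨n, mem_nonZeroDivisors_of_ne_zero hn⟩

theorem nprod_tmul {A : Type u} [NonUnitalRing A] :
    ∀ (k : ℕ) (a : Fin (k + 1) → A) (q : Fin (k + 1) → ℚ),
      nprod k (fun i => a i ⊗ₜ[ℤ] q i) = nprod k a ⊗ₜ nprod k q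
  | 0, _, _ => rfl
  | k + 1, a, q => by simp only [nprod, nprod_tmul k, Algebra.TensorProduct.tmul_mul_tmul]

end TensorProduct

theorem AddMonoidHom.injective_of_exact_of_injective_comp {A N Q W P : Type*} [AddCommGroup A]
    [AddCommGroup N] [AddCommGroup Q] [AddCommGroup W] [AddCommGroup P] {i : A →+ N} {p : N →+ Q}
    {j : N →+ W} {q : Q →+ P} {r : W →+ P} (hip : Function.Exact i p) (hq : Function.Injective q)
    (hji : Function.Injective (j.comp i)) (hcomm : q.comp p = r.comp j) :
    Function.Injective j := by
  refine (injective_iff_map_eq_zero j).mpr fun y hy => ?_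
  have hpy : p y = 0 := (injective_iff_map_eq_zero q).mp hq _ <| by
    rw [← AddMonoidHom.comp_apply, hcomm, AddMonoidHom.comp_apply, hy, map_zero]
  obtain ⟨a, rfl⟩ := (hip y).mp hpy
  rw [(injective_iff_map_eq_zero (j.comp i)).mp hji a hy, map_zero]

namespace NilpAlg

def ofSubalgebra {N : NilpAlg R} (S : NonUnitalSubalgebra R N.carrier) : NilpAlg R where
  carrier := S
  nilpotent := N.nilpotent.imp fun _ =>
    nprod_eq_zero_of_injective (NonUnitalSubalgebraClass.subtype S) Subtype.val_injective

def subtype {N : NilpAlg R} (S : NonUnitalSubalgebra R N.carrier) :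
    (ofSubalgebra S).carrier →ₙₐ[R] N.carrier :=
  NonUnitalSubalgebraClass.subtype S

def IsIdeal {N : NilpAlg R} (I : NonUnitalSubalgebra R N.carrier) : Prop :=
  ∀ (x : N.carrier) {y : N.carrier}, y ∈ I → x * y ∈ I

theorem IsIdeal.comap {N N' : NilpAlg R} (g : N.carrier →ₙₐ[R] N'.carrier)
    {J : NonUnitalSubalgebra R N'.carrier} (hJ : IsIdeal J) : IsIdeal (J.comap g) := by
  intro x y hy
  rw [NonUnitalSubalgebra.mem_comap, map_mul]
  exact hJ _ hy

section Quotient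

variable (N : NilpAlg R) (I : NonUnitalSubalgebra R N.carrier) (hI : IsIdeal I)

def quotient : NilpAlg R :=
  letI : Mul (N.carrier ⧸ I.toSubmodule) :=
    ⟨Quotient.map₂ (fun a b : N.carrier => a * b) fun a c hac b d hbd => by
      have hac : a - c ∈ I := (Submodule.quotientRel_def _).mp hac
      have hbd : b - d ∈ I := (Submodule.quotientRel_def _).mp hbd
      refine (Submodule.quotientRel_def _).mpr ?_
      have key : a * b - c * d = b * (a - c) + c * (b - d) := by
        rw [mul_sub, mul_sub, mul_comm b a, mul_comm b c]; abel
      exact key ▸ I.add_mem (hI b hac) (hI c hbd)⟩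
  letI : NonUnitalCommRing (N.carrier ⧸ I.toSubmodule) :=
    (Submodule.mkQ_surjective _).nonUnitalCommRing _ rfl (fun _ _ => rfl) (fun _ _ => rfl)
      (fun _ => rfl) (fun _ _ => rfl) (fun _ _ => rfl) (fun _ _ => rfl)
  { carrier := N.carrier ⧸ I.toSubmodule
    isScalarTower := ⟨fun r x y => by
      induction x using Submodule.Quotient.induction_on
      induction y using Submodule.Quotient.induction_on
      exact congrArg Submodule.Quotient.mk (smul_mul_assoc _ _ _)⟩
    smulCommClass := ⟨fun r x y => by
      induction x using Submodule.Quotient.induction_on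
      induction y using Submodule.Quotient.induction_on
      exact congrArg Submodule.Quotient.mk (mul_smul_comm _ _ _).symm⟩
    nilpotent := N.nilpotent.imp fun k hk =>
      nprod_eq_zero_of_surjective (⟨I.toSubmodule.mkQ, fun _ _ => rfl⟩ : _ →ₙ* _)
        (Submodule.mkQ_surjective _) fun g => by simp only [hk]; rfl }

def mkQ : N.carrier →ₙₐ[R] (N.quotient I hI).carrier :=
  { I.toSubmodule.mkQ with
    map_zero' := rfl
    map_mul' := fun _ _ => rfl }

variable {N I hI}

theorem mkQ_surjective : Function.Surjective (N.mkQ I hI) :=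
  Submodule.mkQ_surjective _

theorem mkQ_eq_zero_iff {x : N.carrier} : N.mkQ I hI x = 0 ↔ x ∈ I :=
  Submodule.Quotient.mk_eq_zero _

theorem isSES_mkQ {N' : NilpAlg R} (g : N'.carrier →ₙₐ[R] N.carrier) (hg : Function.Injective g)
    (hgI : ∀ y, y ∈ I ↔ y ∈ Set.range g) : IsSES g (N.mkQ I hI) :=
  ⟨hg, mkQ_surjective, fun _ => mkQ_eq_zero_iff.trans (hgI _)⟩

theorem isSES_subtype_mkQ : IsSES (subtype I) (N.mkQ I hI) :=
  isSES_mkQ _ Subtype.val_injective fun y =>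
    ⟨fun hy => ⟨⟨y, hy⟩, rfl⟩, by rintro ⟨y, rfl⟩; exact y.2⟩

theorem quotient_mul_eq_zero (hN : ∀ x y : N.carrier, x * y = 0)
    (x y : (N.quotient I hI).carrier) : x * y = 0 := by
  obtain ⟨a, rfl⟩ := mkQ_surjective x
  obtain ⟨b, rfl⟩ := mkQ_surjective y
  rw [← map_mul, hN, map_zero]

end Quotient

section QuotientMap

variable {N N' : NilpAlg R} {I : NonUnitalSubalgebra R N.carrier} {hI : IsIdeal I}
  {J : NonUnitalSubalgebra R N'.carrier} {hJ : IsIdeal J} (g : N.carrier →ₙₐ[R] N'.carrier)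

def quotientMap (hgIJ : ∀ x ∈ I, g x ∈ J) :
    (N.quotient I hI).carrier →ₙₐ[R] (N'.quotient J hJ).carrier :=
  { I.toSubmodule.mapQ J.toSubmodule (g : N.carrier →ₗ[R] N'.carrier) hgIJ with
    map_zero' := map_zero _
    map_mul' := by
      rintro ⟨x⟩ ⟨y⟩
      exact congrArg Submodule.Quotient.mk (map_mul g x y) }

theorem quotientMap_comp_mkQ (hgIJ : ∀ x ∈ I, g x ∈ J) :
    (quotientMap g hgIJ).comp (N.mkQ I hI) = (N'.mkQ J hJ).comp g :=
  rfl

theorem quotientMap_injective (hgIJ : ∀ x ∈ I, g x ∈ J) (hgJI : ∀ x, g x ∈ J → x ∈ I) :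
    Function.Injective (quotientMap (hI := hI) (hJ := hJ) g hgIJ) := by
  refine (injective_iff_map_eq_zero _).mpr ?_
  rintro ⟨x⟩ hx
  exact mkQ_eq_zero_iff.mpr (hgJI x (mkQ_eq_zero_iff.mp hx))

end QuotientMap

section Annihilator

variable (W : NilpAlg R)

def ann : NonUnitalSubalgebra R W.carrier where
  carrier := {w | ∀ v, v * w = 0}
  add_mem' ha hb v := by rw [mul_add, ha v, hb v, add_zero]
  zero_mem' := mul_zero
  mul_mem' _ hb v := by rw [← mul_assoc, hb]
  smul_mem' r w hw v := by rw [mul_smul_comm, hw v, smul_zero]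

variable {W} {N' : NilpAlg R}

theorem ann_isIdeal : IsIdeal W.ann :=
  fun x _ hy v => by rw [← mul_assoc]; exact hy _

theorem ann_mul_eq_zero (x y : (ofSubalgebra W.ann).carrier) : x * y = 0 :=
  Subtype.ext (y.2 x.1)

theorem comap_ann_mul_eq_zero {j : N'.carrier →ₙₐ[R] W.carrier} (hj : Function.Injective j)
    (x y : (ofSubalgebra (W.ann.comap j)).carrier) : x * y = 0 :=
  Subtype.ext <| hj <| by
    show j (x.1 * y.1) = j 0
    rw [map_mul, map_zero]
    exact y.2 (j x.1)

theorem mem_ann_of_zsmul_mem (hW : IsQVectorSpace W.carrier) (n : ℤ) (hn : n ≠ 0)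
    (w : W.carrier) (hw : n • w ∈ W.ann) : w ∈ W.ann :=
  fun v => hW.eq_zero_of_zsmul_eq_zero hn <| by rw [← mul_smul_comm]; exact hw v

theorem isQVectorSpace_ann (hW : IsQVectorSpace W.carrier) :
    IsQVectorSpace (ofSubalgebra W.ann).carrier :=
  hW.addSubgroupClass W.ann (mem_ann_of_zsmul_mem hW)

theorem isQVectorSpace_quotient_ann (hW : IsQVectorSpace W.carrier) :
    IsQVectorSpace (W.quotient W.ann ann_isIdeal).carrier :=
  hW.quotient W.ann.toSubmodule (mem_ann_of_zsmul_mem hW)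

theorem nprod_quotient_ann_eq_zero {k : ℕ}
    (hW : ∀ f : Fin (k + 2) → W.carrier, nprod (k + 1) f = 0)
    (f : Fin (k + 1) → (W.quotient W.ann ann_isIdeal).carrier) : nprod k f = 0 :=
  nprod_eq_zero_of_surjective (W.mkQ _ _) mkQ_surjective
    (fun g => mkQ_eq_zero_iff.mpr fun v => by rw [← nprod_cons]; exact hW _) f

def annRestrict (j : N'.carrier →ₙₐ[R] W.carrier) :
    (ofSubalgebra (W.ann.comap j)).carrier →ₙₐ[R] (ofSubalgebra W.ann).carrier :=
  NonUnitalAlgHom.codRestrict (j.comp (subtype _)) W.ann fun x => x.2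

theorem subtype_comp_annRestrict (j : N'.carrier →ₙₐ[R] W.carrier) :
    (subtype W.ann).comp (annRestrict j) = j.comp (subtype _) :=
  rfl

theorem annRestrict_injective {j : N'.carrier →ₙₐ[R] W.carrier} (hj : Function.Injective j) :
    Function.Injective (annRestrict j) :=
  fun _ _ h => Subtype.ext (hj (congrArg Subtype.val h))

def quotientAnnMap (j : N'.carrier →ₙₐ[R] W.carrier) :
    (N'.quotient (W.ann.comap j) (ann_isIdeal.comap j)).carrier →ₙₐ[R]
      (W.quotient W.ann ann_isIdeal).carrier :=
  quotientMap j fun _ hx => hx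

end Annihilator

section Rationalization

open TensorProduct

variable (N : NilpAlg R)

noncomputable def rationalization : NilpAlg R :=
  letI : NonUnitalCommRing (N.carrier ⊗[ℤ] ℚ) :=
    { (inferInstance : NonUnitalRing (N.carrier ⊗[ℤ] ℚ)) with
      mul_comm := fun x y => by
        obtain ⟨a, p, rfl⟩ := exists_tmul_eq_rat x
        obtain ⟨b, q, rfl⟩ := exists_tmul_eq_rat y
        rw [Algebra.TensorProduct.tmul_mul_tmul, Algebra.TensorProduct.tmul_mul_tmul, mul_comm a,
          mul_comm p] }
  { carrier := N.carrier ⊗[ℤ] ℚ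
    nilpotent := N.nilpotent.imp fun k hk f => by
      choose a q hf using fun i => exists_tmul_eq_rat (f i)
      rw [← funext hf, nprod_tmul, hk, zero_tmul] }

noncomputable def toRationalization : N.carrier →ₙₐ[R] N.rationalization.carrier where
  toFun x := x ⊗ₜ (1 : ℚ)
  map_smul' _ _ := rfl
  map_zero' := zero_tmul _ _
  map_add' _ _ := add_tmul _ _ _
  map_mul' x y := by
    show (x * y) ⊗ₜ (1 : ℚ) = (x ⊗ₜ[ℤ] (1 : ℚ)) * (y ⊗ₜ[ℤ] (1 : ℚ))
    rw [Algebra.TensorProduct.tmul_mul_tmul, mul_one]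

theorem isQVectorSpace_rationalization : IsQVectorSpace N.rationalization.carrier :=
  isQVectorSpace_rat

end Rationalization

end NilpAlg

namespace AbFunctor

open NilpAlg

variable (Φ : AbFunctor.{u, v} R)

theorem injective_map_of_comp_eq_id {N N' : NilpAlg R} (j : N'.carrier →ₙₐ[R] N.carrier)
    (g : N.carrier →ₙₐ[R] N'.carrier) (h : g.comp j = NonUnitalAlgHom.id R N'.carrier) :
    Function.Injective (Φ.map j) :=
  Function.LeftInverse.injective (g := Φ.map g) fun y => by
    rw [← AddMonoidHom.comp_apply, ← Φ.map_comp, h, Φ.map_id, AddMonoidHom.id_apply]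

variable {Φ} {W N' : NilpAlg R}

theorem injective_map_subtype_ann (hQ : Φ.ExactOn fun N => IsQVectorSpace N.carrier)
    (hW : IsQVectorSpace W.carrier) : Function.Injective (Φ.map (subtype W.ann)) :=
  (hQ (isQVectorSpace_ann hW) hW (isQVectorSpace_quotient_ann hW) _ _
    (isSES_subtype_mkQ (hI := ann_isIdeal))).1

theorem injective_map_annRestrict (hsq : Φ.ExactOn fun N => ∀ x y : N.carrier, x * y = 0)
    {j : N'.carrier →ₙₐ[R] W.carrier} (hj : Function.Injective j) :
    Function.Injective (Φ.map (annRestrict j)) :=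
  (hsq (comap_ann_mul_eq_zero hj) ann_mul_eq_zero (quotient_mul_eq_zero ann_mul_eq_zero) _ _
    (isSES_mkQ (I := NonUnitalAlgHom.range (annRestrict j))
      (hI := fun x y _ => ann_mul_eq_zero x y ▸ zero_mem _)
      _ (annRestrict_injective hj) fun _ => Iff.rfl)).1

theorem injective_map_of_injective_map_quotientAnnMap (hre : Φ.RightExact)
    (hQ : Φ.ExactOn fun N => IsQVectorSpace N.carrier)
    (hsq : Φ.ExactOn fun N => ∀ x y : N.carrier, x * y = 0) (hW : IsQVectorSpace W.carrier)
    {j : N'.carrier →ₙₐ[R] W.carrier} (hj : Function.Injective j)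
    (hjq : Function.Injective (Φ.map (quotientAnnMap j))) : Function.Injective (Φ.map j) := by
  refine AddMonoidHom.injective_of_exact_of_injective_comp
    (hre _ _ (isSES_subtype_mkQ (hI := ann_isIdeal.comap j))).2 hjq ?_
    (r := Φ.map (W.mkQ W.ann ann_isIdeal)) ?_
  · rw [← Φ.map_comp, ← subtype_comp_annRestrict, Φ.map_comp, AddMonoidHom.coe_comp]
    exact (injective_map_subtype_ann hQ hW).comp (injective_map_annRestrict hsq hj)
  · rw [← Φ.map_comp, ← Φ.map_comp]
    exact congrArg Φ.map (quotientMap_comp_mkQ _ _)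

theorem injective_map_of_isQVectorSpace (hre : Φ.RightExact)
    (hQ : Φ.ExactOn fun N => IsQVectorSpace N.carrier)
    (hsq : Φ.ExactOn fun N => ∀ x y : N.carrier, x * y = 0) (hW : IsQVectorSpace W.carrier)
    {j : N'.carrier →ₙₐ[R] W.carrier} (hj : Function.Injective j) :
    Function.Injective (Φ.map j) := by
  obtain ⟨k, hk⟩ := W.nilpotent
  induction k generalizing W N' with
  | zero =>
    have hN' (x : N'.carrier) : x = 0 := hj (by rw [map_zero]; exact hk fun _ => j x)
    exact Φ.injective_map_of_comp_eq_id j 0 (NonUnitalAlgHom.ext fun x => (hN' x).symm)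
  | succ k ih =>
    exact injective_map_of_injective_map_quotientAnnMap hre hQ hsq hW hj <|
      ih (isQVectorSpace_quotient_ann hW) (quotientMap_injective _ _ fun _ hx => hx)
        (nprod_quotient_ann_eq_zero hk)

end AbFunctor

theorem stmt5_general (R : Type u) [CommRing R]
    (Φ : AbFunctor.{u, v} R) (hre : Φ.RightExact)
    (hQ : Φ.ExactOn fun N => IsQVectorSpace N.carrier)
    (hsq : Φ.ExactOn fun N => ∀ x y : N.carrier, x * y = 0)
    (N' N : NilpAlg R) (f : N'.carrier →ₙₐ[R] N.carrier)
    (hf : Function.Injective f)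
    (htf : ∀ (n : ℤ) (x : N'.carrier), n ≠ 0 → n • x = 0 → x = 0) :
    Function.Injective (Φ.map f) := by
  have hj : Function.Injective (N.toRationalization.comp f) := by
    refine (injective_iff_map_eq_zero _).mpr fun x hx => ?_
    obtain ⟨n, hn, hnx⟩ :=
      TensorProduct.exists_zsmul_eq_zero_of_tmul_one_eq_zero (M := N.carrier) (m := f x) hx
    exact htf n x hn (hf (by rw [map_zsmul, hnx, map_zero]))
  have hΦj := Φ.injective_map_of_isQVectorSpace hre hQ hsq N.isQVectorSpace_rationalization hj
  rw [Φ.map_comp, AddMonoidHom.coe_comp] at hΦj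
  exact hΦj.of_comp

theorem stmt5 (R : Type u) [CommRing R]
    (hR : ∀ (n : ℤ) (r : R), n ≠ 0 → n • r = 0 → r = 0)
    (Φ : AbFunctor.{u, v} R) (hre : Φ.RightExact)
    (hQ : Φ.ExactOn fun N => IsQVectorSpace N.carrier)
    (hsq : Φ.ExactOn fun N => ∀ x y : N.carrier, x * y = 0)
    (N' N : NilpAlg R) (f : N'.carrier →ₙₐ[R] N.carrier)
    (hf : Function.Injective f)
    (htf : ∀ (n : ℤ) (x : N'.carrier), n ≠ 0 → n • x = 0 → x = 0) :
    Function.Injective (Φ.map f) :=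
  stmt5_general R Φ hre hQ hsq N' N f hf htf
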